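/- arXiv:1005.0332 — 8 statements merged into one kernel-verified Lean document; each statement's English description precedes it below -/
import Mathlib

section
/- If at a fixed point of the system some stage population S*_j equals 0, then all stage populations and all immune responses are 0, i.e., the fixed point is the origin. -/
/-- Follow-on factor `M_j = r_j f_j / (a_{j+1} + f_{j+1})`. -/
noncomputable def Mfac {n : ℕ} (r f a : ZMod n → ℝ) (j : ZMod n) : ℝ :=
  r j * f j / (a (j + 1) + f (j + 1))

/-- Cyclic product `M_{jk} = ∏_{ℓ ∈ [j,k)} M_ℓ` (with `M_{jj} = 1`). -/
noncomputable def cycProd {n : ℕ} (M : ZMod n → ℝ) (j k : ZMod n) : ℝ :=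
  ∏ i ∈ Finset.range ((k - j).val), M (j + (i : ZMod n))

/-- Walking backwards from `j₀` reaches every residue, since `j = j₀ - (j₀ - j).val`. -/
theorem ZMod.induction_sub_one {n : ℕ} [NeZero n] {P : ZMod n → Prop} {j₀ : ZMod n}
    (h₀ : P j₀) (hstep : ∀ j, P j → P (j - 1)) (j : ZMod n) : P j := by
  have hback : ∀ k : ℕ, P (j₀ - k) := by
    intro k
    induction k with
    | zero => simpa using h₀
    | succ k ih => simpa [sub_sub] using hstep _ ih
  simpa using hback (j₀ - j).val

theorem stmt0_general (n : ℕ) [NeZero n]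
    (r f a S T : ZMod n → ℝ) (b : ℝ)
    (hr : ∀ j, 0 < r j) (hf : ∀ j, 0 < f j) (hb : 0 < b)
    (hfix1 : ∀ j, r (j - 1) * f (j - 1) * S (j - 1) = S j * (a j + f j + T j))
    (hfix2 : ∀ j, (S j - b) * T j = 0)
    (j₀ : ZMod n) (hS0 : S j₀ = 0) :
    ∀ j, S j = 0 ∧ T j = 0 := by
  have hS : ∀ j, S j = 0 := ZMod.induction_sub_one hS0 fun j hj => by
    have h := hfix1 j
    rw [hj, zero_mul] at h
    exact (mul_eq_zero.mp h).resolve_left (mul_ne_zero (hr _).ne' (hf _).ne')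
  intro j
  refine ⟨hS j, ?_⟩
  have h := hfix2 j
  rw [hS j, zero_sub] at h
  exact (mul_eq_zero.mp h).resolve_left (neg_ne_zero.mpr hb.ne')

/-- If at a fixed point some stage population vanishes, the fixed point is the origin. -/
theorem stmt0 (n : ℕ) [NeZero n] (hn : 1 < n)
    (r f a S T : ZMod n → ℝ) (b : ℝ)
    (hr : ∀ j, 0 < r j) (hf : ∀ j, 0 < f j) (hb : 0 < b)
    (haf : ∀ j, 0 < a j + f j)
    (hfix1 : ∀ j, r (j - 1) * f (j - 1) * S (j - 1) = S j * (a j + f j + T j))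
    (hfix2 : ∀ j, (S j - b) * T j = 0)
    (j₀ : ZMod n) (hS0 : S j₀ = 0) :
    ∀ j, S j = 0 ∧ T j = 0 :=
  stmt0_general n r f a S T b hr hf hb hfix1 hfix2 j₀ hS0
end

section
/- If R_0 := ∏_{j=0}^{n-1} M_j ≠ 1 and (S*, T*) is a nonzero fixed point, then at least one stage is regulated, i.e., T*_j ≠ 0 for some j. -/
/-!
If no stage is regulated, every `T*_j` vanishes and the fixed-point equations become the cyclic
recurrence `S*_j (a_j + f_j) = r_{j-1} f_{j-1} S*_{j-1}`. Since `r f > 0`, a nonzero `S*_j`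
forces `S*_{j+1} ≠ 0`, so going once around the cycle every `S*_j` is nonzero. Multiplying the
`n` equations and cancelling `∏ S*_j` gives `∏ (a_j + f_j) = ∏ r_j f_j`, that is `R₀ = 1`.
-/

theorem ZMod.forall_of_imp_add_one {n : ℕ} [NeZero n] {P : ZMod n → Prop}
    (hstep : ∀ j, P j → P (j + 1)) {j₀ : ZMod n} (h₀ : P j₀) (j : ZMod n) : P j := by
  have hreach : ∀ k : ℕ, P (j₀ + k) := by
    intro k
    induction k with
    | zero => simpa using h₀
    | succ k ih => simpa [add_assoc] using hstep _ ih
  simpa using hreach (j - j₀).val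

section CyclicRecurrence

variable {M : Type*} [CommMonoidWithZero M] [IsCancelMulZero M] {n : ℕ} [NeZero n]
  {S c d : ZMod n → M}

theorem ne_zero_of_cyclic_recurrence (hd : ∀ j, d j ≠ 0)
    (hrec : ∀ j, S j * c j = d (j - 1) * S (j - 1)) {j₀ : ZMod n} (h₀ : S j₀ ≠ 0)
    (j : ZMod n) : S j ≠ 0 := by
  refine ZMod.forall_of_imp_add_one (P := fun i => S i ≠ 0) (fun i hi hzero => ?_) h₀ j
  have := hrec (i + 1)
  rw [add_sub_cancel_right, hzero, zero_mul] at this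
  exact mul_ne_zero (hd i) hi this.symm

theorem prod_eq_prod_of_cyclic_recurrence (hd : ∀ j, d j ≠ 0)
    (hrec : ∀ j, S j * c j = d (j - 1) * S (j - 1)) (hS : ∃ j, S j ≠ 0) :
    ∏ j, c j = ∏ j, d j := by
  obtain ⟨j₀, h₀⟩ := hS
  have : Nontrivial M := ⟨⟨_, _, h₀⟩⟩
  have hprodS : ∏ j, S j ≠ 0 :=
    Finset.prod_ne_zero_iff.2 fun j _ => ne_zero_of_cyclic_recurrence hd hrec h₀ j
  refine mul_left_cancel₀ hprodS ?_
  calc (∏ j, S j) * ∏ j, c j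
      = ∏ j, d (j - 1) * S (j - 1) := by
        rw [← Finset.prod_mul_distrib]; exact Finset.prod_congr rfl fun j _ => hrec j
    _ = ∏ j, d j * S j := Equiv.prod_comp (Equiv.subRight 1) fun j => d j * S j
    _ = (∏ j, S j) * ∏ j, d j := by rw [Finset.prod_mul_distrib, mul_comm]

end CyclicRecurrence

theorem prod_Mfac {n : ℕ} [NeZero n] (r f a : ZMod n → ℝ) :
    ∏ j, Mfac r f a j = (∏ j, r j * f j) / ∏ j, (a j + f j) := by
  rw [← Equiv.prod_comp (Equiv.addRight 1) fun j => a j + f j, ← Finset.prod_div_distrib]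
  rfl

theorem stmt4_general (n : ℕ) [NeZero n]
    (r f a S T : ZMod n → ℝ)
    (hr : ∀ j, 0 < r j) (hf : ∀ j, 0 < f j)
    (hfix1 : ∀ j, r (j - 1) * f (j - 1) * S (j - 1) = S j * (a j + f j + T j))
    (hR0 : (∏ j : ZMod n, Mfac r f a j) ≠ 1)
    (hnz : ∃ j, S j ≠ 0 ∨ T j ≠ 0) :
    ∃ j, T j ≠ 0 := by
  by_contra! hT
  have hrf : ∀ j, r j * f j ≠ 0 := fun j => (mul_pos (hr j) (hf j)).ne'
  have hS : ∃ j, S j ≠ 0 := by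
    obtain ⟨j, hj | hj⟩ := hnz
    exacts [⟨j, hj⟩, (hj (hT j)).elim]
  have hprod : ∏ j, (a j + f j) = ∏ j, r j * f j :=
    prod_eq_prod_of_cyclic_recurrence (S := S) hrf
      (fun j => by simpa [hT j] using (hfix1 j).symm) hS
  apply hR0
  rw [prod_Mfac, hprod, div_self (Finset.prod_ne_zero_iff.2 fun j _ => hrf j)]

/-- If R₀ ≠ 1 and (S*, T*) is a nonzero fixed point, then some stage is regulated. -/
theorem stmt4 (n : ℕ) [NeZero n] (hn : 1 < n)
    (r f a S T : ZMod n → ℝ) (b : ℝ)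
    (hr : ∀ j, 0 < r j) (hf : ∀ j, 0 < f j) (hb : 0 < b)
    (haf : ∀ j, 0 < a j + f j)
    (hfix1 : ∀ j, r (j - 1) * f (j - 1) * S (j - 1) = S j * (a j + f j + T j))
    (hfix2 : ∀ j, (S j - b) * T j = 0)
    (hR0 : (∏ j : ZMod n, Mfac r f a j) ≠ 1)
    (hnz : ∃ j, S j ≠ 0 ∨ T j ≠ 0) :
    ∃ j, T j ≠ 0 :=
  stmt4_general n r f a S T hr hf hfix1 hR0 hnz
end

section
/- For generic parameters (R_0 ≠ 1 and M_{jk} ≠ 1 for all j ≠ k), for every subset R of the stages {0, ..., n-1} there is exactly one fixed point (S*, T*) whose set of regulated stages equals R; hence the system has exactly 2^n fixed points. -/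
/-!
At a fixed point with regulated set `R` we have `S_j = b` for `j ∈ R` and `T_j = 0` for `j ∉ R`, so
`S` solves the cyclic affine recurrence `S_j = c_j S_{j-1} + e_j` with `c_j = 0` on `R` and
`c_j = M_{j-1}` off `R`, and `T` is read off from `S`. Going once around the cycle multiplies by
`∏ c_j`, which is `0` or `R_0`, never `1`; so the recurrence has exactly one solution. The stages
of `R` are indeed regulated: if `h` is the regulated stage preceding `j ∈ R`, then
`M_{j-1} S_{j-1} = M_{hj} b ≠ b` (with `M_{jj}` read as `R_0`). Counting subsets `R` gives `2^n`.
-/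

open Finset

theorem Set.ncard_setOf_eq_natCard_of_existsUnique {α β : Type*} {P : α → Prop} (g : α → β)
    (h : ∀ y, ∃! x, P x ∧ g x = y) : {x | P x}.ncard = Nat.card β := by
  rw [← Nat.card_coe_set_eq]
  refine Nat.card_eq_of_bijective (fun x => g x.1) ⟨fun x₁ x₂ hg => ?_, fun y => ?_⟩
  · exact Subtype.ext ((h (g x₂)).unique ⟨x₁.2, hg⟩ ⟨x₂.2, rfl⟩)
  · obtain ⟨x, ⟨hx, rfl⟩, -⟩ := h y
    exact ⟨⟨x, hx⟩, rfl⟩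

theorem eq_prod_range_mul_of_succ {M : Type*} [CommMonoid M] {s m : ℕ → M} {d : ℕ}
    (hs : ∀ i < d, s (i + 1) = m i * s i) : s d = (∏ i ∈ range d, m i) * s 0 := by
  induction d with
  | zero => simp
  | succ d ih =>
    rw [hs d d.lt_succ_self, ih fun i hi => hs i (by omega), prod_range_succ, mul_comm _ (m d),
      mul_assoc]

section CyclicRecurrence

variable {n : ℕ} [NeZero n]

theorem prod_range_add_natCast {M : Type*} [CommMonoid M] (g : ZMod n → M) (h : ZMod n) :
    ∏ i ∈ range n, g (h + i) = ∏ j, g j := by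
  refine prod_nbij' (fun i : ℕ => h + i) (fun j => (j - h).val) (fun _ _ => mem_univ _)
    (fun j _ => mem_range.mpr (ZMod.val_lt _)) (fun i hi => ?_) (fun j _ => by simp)
    (fun _ _ => rfl)
  simp [ZMod.val_cast_of_lt (mem_range.mp hi)]

theorem eq_zero_of_forall_eq_mul_sub_one {K : Type*} [CommRing K] [NoZeroDivisors K]
    {c D : ZMod n → K} (hD : ∀ j, D j = c j * D (j - 1)) (hc : ∏ j, c j ≠ 1) : D = 0 := by
  funext h
  have hloop := eq_prod_range_mul_of_succ (s := fun i : ℕ => D (h + i))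
    (m := fun i => c (h + 1 + i)) (d := n) fun i _ => by
      rw [hD, Nat.cast_succ, ← add_assoc, add_sub_cancel_right, add_right_comm]
  simp only [ZMod.natCast_self, add_zero, Nat.cast_zero, prod_range_add_natCast] at hloop
  have : (1 - ∏ j, c j) * D h = 0 := by linear_combination hloop
  exact (mul_eq_zero.mp this).resolve_left (sub_ne_zero.mpr hc.symm)

theorem existsUnique_eq_mul_sub_one_add {K : Type*} [Field K] (c e : ZMod n → K)
    (hc : ∏ j, c j ≠ 1) : ∃! S : ZMod n → K, ∀ j, S j = c j * S (j - 1) + e j := by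
  let L : (ZMod n → K) →ₗ[K] ZMod n → K :=
    LinearMap.id - LinearMap.pi fun j => c j • LinearMap.proj (j - 1)
  have hL : ∀ S e, (∀ j, S j = c j * S (j - 1) + e j) ↔ L S = e := fun S e => by
    simp [funext_iff, L, sub_eq_iff_eq_add']
  have hinj : Function.Injective L := by
    rw [← LinearMap.ker_eq_bot, LinearMap.ker_eq_bot']
    refine fun D hD => eq_zero_of_forall_eq_mul_sub_one (fun j => ?_) hc
    simpa using (hL D 0).mpr hD j
  obtain ⟨S, hS⟩ := LinearMap.injective_iff_surjective.mp hinj e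
  exact ⟨S, (hL S e).mpr hS, fun S' hS' => hinj (((hL S' e).mp hS').trans hS.symm)⟩

theorem exists_prev_mem {R : Finset (ZMod n)} {j : ZMod n} (hj : j ∈ R) :
    ∃ h ∈ R, ∃ d : ℕ, 0 < d ∧ d ≤ n ∧ h + d = j ∧ ∀ e : ℕ, 0 < e → e < d → h + e ∉ R := by
  classical
  have hfull : 0 < n ∧ j - n ∈ R := ⟨NeZero.pos n, by simpa using hj⟩
  have hex : ∃ d : ℕ, 0 < d ∧ j - d ∈ R := ⟨n, hfull⟩
  refine ⟨j - Nat.find hex, (Nat.find_spec hex).2, Nat.find hex, (Nat.find_spec hex).1,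
    Nat.find_le hfull, sub_add_cancel _ _, fun e he hed hmem => ?_⟩
  refine Nat.find_min hex (m := Nat.find hex - e) (by omega) ⟨by omega, ?_⟩
  rwa [Nat.cast_sub hed.le, sub_sub_eq_add_sub, add_sub_right_comm]

theorem prod_range_add_ne_one {M : ZMod n → ℝ} (hgen1 : ∏ j, M j ≠ 1)
    (hgen2 : ∀ j k, j ≠ k → cycProd M j k ≠ 1) (h : ZMod n) {d : ℕ} (hd : 0 < d)
    (hdn : d ≤ n) : ∏ i ∈ range d, M (h + i) ≠ 1 := by
  rcases hdn.eq_or_lt with rfl | hdn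
  · rwa [prod_range_add_natCast]
  · have hval : (h + d - h).val = d := by rw [add_sub_cancel_left, ZMod.val_cast_of_lt hdn]
    have hne : h ≠ h + d := by
      intro hh
      rw [← hh, sub_self, ZMod.val_zero] at hval
      omega
    simpa only [cycProd, hval] using hgen2 h (h + d) hne

end CyclicRecurrence

section FixedPoints

variable {n : ℕ} (r f a : ZMod n → ℝ) (b : ℝ)

def IsFixedPoint (S T : ZMod n → ℝ) : Prop :=
  (∀ j, r (j - 1) * f (j - 1) * S (j - 1) = S j * (a j + f j + T j)) ∧
    ∀ j, (S j - b) * T j = 0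

noncomputable def regulatedSet [NeZero n] (T : ZMod n → ℝ) : Finset (ZMod n) :=
  univ.filter fun j => T j ≠ 0

def SolvesRecurrence (R : Finset (ZMod n)) (S : ZMod n → ℝ) : Prop :=
  ∀ j, S j = if j ∈ R then b else Mfac r f a (j - 1) * S (j - 1)

noncomputable def fixedT (R : Finset (ZMod n)) (S : ZMod n → ℝ) (j : ZMod n) : ℝ :=
  if j ∈ R then r (j - 1) * f (j - 1) * S (j - 1) / b - (a j + f j) else 0

variable {r f a b}

theorem Mfac_sub_one_mul {j : ZMod n} (haf : a j + f j ≠ 0) :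
    Mfac r f a (j - 1) * (a j + f j) = r (j - 1) * f (j - 1) := by
  rw [Mfac, sub_add_cancel, div_mul_cancel₀ _ haf]

variable {S T : ZMod n → ℝ} {R : Finset (ZMod n)}

theorem SolvesRecurrence.isFixedPoint (haf : ∀ j, a j + f j ≠ 0) (hb : b ≠ 0)
    (hS : SolvesRecurrence r f a b R S) : IsFixedPoint r f a b S (fixedT r f a b R S) := by
  refine ⟨fun j => ?_, fun j => ?_⟩ <;> rw [fixedT] <;> split_ifs with hj
  · rw [hS j, if_pos hj]
    field_simp
    ring
  · rw [hS j, if_neg hj, ← Mfac_sub_one_mul (haf j)]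
    ring
  · rw [hS j, if_pos hj, sub_self, zero_mul]
  · exact mul_zero _

variable [NeZero n]

theorem mem_regulatedSet {j : ZMod n} : j ∈ regulatedSet T ↔ T j ≠ 0 := by
  simp [regulatedSet]

theorem IsFixedPoint.solvesRecurrence (haf : ∀ j, a j + f j ≠ 0)
    (hp : IsFixedPoint r f a b S T) : SolvesRecurrence r f a b (regulatedSet T) S := by
  intro j
  split_ifs with hj
  · exact sub_eq_zero.mp ((mul_eq_zero.mp (hp.2 j)).resolve_right (mem_regulatedSet.mp hj))
  · have hT : T j = 0 := not_not.mp (mt mem_regulatedSet.mpr hj)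
    apply mul_right_cancel₀ (haf j)
    linear_combination -(hp.1 j) - S (j - 1) * Mfac_sub_one_mul (haf j) - S j * hT

theorem IsFixedPoint.eq_fixedT (hb : b ≠ 0) (hp : IsFixedPoint r f a b S T) :
    T = fixedT r f a b (regulatedSet T) S := by
  funext j
  rw [fixedT]
  split_ifs with hj
  · have hS : S j = b :=
      sub_eq_zero.mp ((mul_eq_zero.mp (hp.2 j)).resolve_right (mem_regulatedSet.mp hj))
    rw [hp.1 j, hS]
    field_simp
    ring
  · exact not_not.mp (mt mem_regulatedSet.mpr hj)

theorem SolvesRecurrence.Mfac_mul_prev_ne (hb : b ≠ 0) (hgen1 : ∏ j, Mfac r f a j ≠ 1)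
    (hgen2 : ∀ j k, j ≠ k → cycProd (Mfac r f a) j k ≠ 1) (hS : SolvesRecurrence r f a b R S)
    {j : ZMod n} (hj : j ∈ R) : Mfac r f a (j - 1) * S (j - 1) ≠ b := by
  obtain ⟨h, hh, d, hd, hdn, rfl, hout⟩ := exists_prev_mem hj
  obtain ⟨d, rfl⟩ : ∃ d', d = d' + 1 := ⟨d - 1, by omega⟩
  have hpath : S (h + d) = (∏ i ∈ range d, Mfac r f a (h + i)) * S h := by
    have := eq_prod_range_mul_of_succ (s := fun i : ℕ => S (h + i)) (d := d) fun i hi => by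
      rw [hS, if_neg (hout (i + 1) i.succ_pos (by omega)), Nat.cast_succ, ← add_assoc,
        add_sub_cancel_right]
    rwa [Nat.cast_zero, add_zero] at this
  have hprev : h + ((d + 1 : ℕ) : ZMod n) - 1 = h + d := by push_cast; ring
  rw [hprev, hpath, hS h, if_pos hh, ← mul_assoc,
    ← prod_range_succ_comm (fun i : ℕ => Mfac r f a (h + i)), Ne, mul_eq_right₀ hb]
  exact prod_range_add_ne_one hgen1 hgen2 h d.succ_pos hdn

theorem SolvesRecurrence.regulatedSet_fixedT (haf : ∀ j, a j + f j ≠ 0) (hb : b ≠ 0)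
    (hgen1 : ∏ j, Mfac r f a j ≠ 1) (hgen2 : ∀ j k, j ≠ k → cycProd (Mfac r f a) j k ≠ 1)
    (hS : SolvesRecurrence r f a b R S) : regulatedSet (fixedT r f a b R S) = R := by
  ext j
  rw [mem_regulatedSet, fixedT]
  split_ifs with hj
  · simp only [hj, iff_true, ← Mfac_sub_one_mul (haf j)]
    have hne := hS.Mfac_mul_prev_ne hb hgen1 hgen2 hj
    intro h0
    field_simp at h0
    exact hne (mul_right_cancel₀ (haf j) (by linear_combination h0))
  · simp [hj]

theorem existsUnique_solvesRecurrence (hgen1 : ∏ j, Mfac r f a j ≠ 1) (R : Finset (ZMod n)) :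
    ∃! S, SolvesRecurrence r f a b R S := by
  have hc : ∏ j, (if j ∈ R then 0 else Mfac r f a (j - 1)) ≠ 1 := by
    rcases R.eq_empty_or_nonempty with rfl | ⟨k, hk⟩
    · simpa using ((Equiv.subRight (1 : ZMod n)).prod_comp (Mfac r f a)).trans_ne hgen1
    · rw [prod_eq_zero (mem_univ k) (by simp [hk])]
      exact zero_ne_one
  refine (existsUnique_congr fun S => forall_congr' fun j => ?_).mp
    (existsUnique_eq_mul_sub_one_add _ (fun j => if j ∈ R then b else 0) hc)
  split_ifs <;> simp

theorem existsUnique_isFixedPoint_regulatedSet_eq (haf : ∀ j, a j + f j ≠ 0) (hb : b ≠ 0)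
    (hgen1 : ∏ j, Mfac r f a j ≠ 1) (hgen2 : ∀ j k, j ≠ k → cycProd (Mfac r f a) j k ≠ 1)
    (R : Finset (ZMod n)) :
    ∃! p : (ZMod n → ℝ) × (ZMod n → ℝ), IsFixedPoint r f a b p.1 p.2 ∧ regulatedSet p.2 = R := by
  obtain ⟨S, hS, hSuniq⟩ := existsUnique_solvesRecurrence (b := b) hgen1 R
  refine ⟨(S, fixedT r f a b R S),
    ⟨hS.isFixedPoint haf hb, hS.regulatedSet_fixedT haf hb hgen1 hgen2⟩, ?_⟩
  rintro ⟨S', T'⟩ ⟨hp, rfl⟩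
  obtain rfl := hSuniq S' (hp.solvesRecurrence haf)
  exact Prod.ext rfl (hp.eq_fixedT hb)

end FixedPoints

theorem stmt6_general (n : ℕ) [NeZero n]
    (r f a : ZMod n → ℝ) (b : ℝ)
    (hb : 0 < b)
    (haf : ∀ j, 0 < a j + f j)
    (hgen1 : (∏ j : ZMod n, Mfac r f a j) ≠ 1)
    (hgen2 : ∀ j k : ZMod n, j ≠ k → cycProd (Mfac r f a) j k ≠ 1) :
    (∀ R : Finset (ZMod n),
      ∃! p : (ZMod n → ℝ) × (ZMod n → ℝ),
        (∀ j, r (j - 1) * f (j - 1) * p.1 (j - 1) = p.1 j * (a j + f j + p.2 j)) ∧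
        (∀ j, (p.1 j - b) * p.2 j = 0) ∧
        (∀ j, p.2 j ≠ 0 ↔ j ∈ R)) ∧
    Set.ncard {p : (ZMod n → ℝ) × (ZMod n → ℝ) |
        (∀ j, r (j - 1) * f (j - 1) * p.1 (j - 1) = p.1 j * (a j + f j + p.2 j)) ∧
        (∀ j, (p.1 j - b) * p.2 j = 0)} = 2 ^ n := by
  have key := existsUnique_isFixedPoint_regulatedSet_eq (fun j => (haf j).ne') hb.ne' hgen1 hgen2
  refine ⟨fun R => (existsUnique_congr fun p => ?_).mp (key R), ?_⟩
  · simp only [IsFixedPoint, and_assoc, Finset.ext_iff, mem_regulatedSet]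
  · exact (Set.ncard_setOf_eq_natCard_of_existsUnique (fun p => regulatedSet p.2) key).trans
      (by simp [ZMod.card])

/-- For generic parameters, each subset R of stages is the regulated set of exactly
one fixed point; hence there are exactly 2^n fixed points. -/
theorem stmt6 (n : ℕ) [NeZero n] (hn : 1 < n)
    (r f a : ZMod n → ℝ) (b : ℝ)
    (hr : ∀ j, 0 < r j) (hf : ∀ j, 0 < f j) (hb : 0 < b)
    (haf : ∀ j, 0 < a j + f j)
    (hgen1 : (∏ j : ZMod n, Mfac r f a j) ≠ 1)
    (hgen2 : ∀ j k : ZMod n, j ≠ k → cycProd (Mfac r f a) j k ≠ 1) :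
    (∀ R : Finset (ZMod n),
      ∃! p : (ZMod n → ℝ) × (ZMod n → ℝ),
        (∀ j, r (j - 1) * f (j - 1) * p.1 (j - 1) = p.1 j * (a j + f j + p.2 j)) ∧
        (∀ j, (p.1 j - b) * p.2 j = 0) ∧
        (∀ j, p.2 j ≠ 0 ↔ j ∈ R)) ∧
    Set.ncard {p : (ZMod n → ℝ) × (ZMod n → ℝ) |
        (∀ j, r (j - 1) * f (j - 1) * p.1 (j - 1) = p.1 j * (a j + f j + p.2 j)) ∧
        (∀ j, (p.1 j - b) * p.2 j = 0)} = 2 ^ n :=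
  stmt6_general n r f a b hb haf hgen1 hgen2
end

section
/- The starvation relation j ≻ k (defined by M_{jk} < 1 for j ≠ k) is transitive whenever R_0 > 1: if M_{jk} < 1 and M_{kℓ} < 1 then M_{jℓ} < 1. -/
theorem ZMod.prod_range_add_natCast_eq_prod_univ {β : Type*} [CommMonoid β] (n : ℕ) [NeZero n]
    (f : ZMod n → β) (j : ZMod n) :
    ∏ i ∈ Finset.range n, f (j + (i : ZMod n)) = ∏ x, f x :=
  Finset.prod_nbij' (fun i => j + (i : ZMod n)) (fun x => (x - j).val)
    (fun _ _ => Finset.mem_univ _)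
    (fun x _ => Finset.mem_range.2 (x - j).val_lt)
    (fun i hi => by simpa using ZMod.val_cast_of_lt (Finset.mem_range.1 hi))
    (fun x _ => by simp)
    (fun _ _ => rfl)

theorem cycProd_nonneg {n : ℕ} {M : ZMod n → ℝ} (hM : ∀ j, 0 ≤ M j) (j k : ZMod n) :
    0 ≤ cycProd M j k :=
  Finset.prod_nonneg fun _ _ => hM _

theorem cycProd_mul_cycProd_eq_prod_range {n : ℕ} [NeZero n] (M : ZMod n → ℝ) (j k l : ZMod n) :
    cycProd M j k * cycProd M k l =
      ∏ i ∈ Finset.range ((k - j).val + (l - k).val), M (j + (i : ZMod n)) := by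
  rw [Finset.prod_range_add, cycProd, cycProd]
  congr 1
  refine Finset.prod_congr rfl fun i _ => ?_
  rw [Nat.cast_add, ZMod.natCast_zmod_val, ← add_assoc, add_sub_cancel]

theorem cycProd_mul_cycProd {n : ℕ} [NeZero n] (M : ZMod n → ℝ) (j k l : ZMod n) :
    cycProd M j k * cycProd M k l = cycProd M j l ∨
      cycProd M j k * cycProd M k l = (∏ x, M x) * cycProd M j l := by
  have hsum : (k - j) + (l - k) = l - j := sub_add_sub_cancel' ..
  rw [cycProd_mul_cycProd_eq_prod_range]
  rcases lt_or_ge ((k - j).val + (l - k).val) n with h | h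
  · left
    rw [← ZMod.val_add_of_lt h, hsum, cycProd]
  · right
    rw [ZMod.val_add_val_of_le h, hsum, add_comm, Finset.prod_range_add,
      ZMod.prod_range_add_natCast_eq_prod_univ, cycProd]
    congr 1
    refine Finset.prod_congr rfl fun i _ => ?_
    rw [Nat.cast_add, ZMod.natCast_self, zero_add]

theorem stmt7_general (n : ℕ) [NeZero n] (M : ZMod n → ℝ) (hM : ∀ j, 0 < M j)
    (hR0 : 1 < ∏ j : ZMod n, M j)
    (j k l : ZMod n)
    (h1 : cycProd M j k < 1) (h2 : cycProd M k l < 1) :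
    cycProd M j l < 1 := by
  have hM' : ∀ j, 0 ≤ M j := fun j => (hM j).le
  have hprod : cycProd M j k * cycProd M k l < 1 :=
    mul_lt_one_of_nonneg_of_lt_one_left (cycProd_nonneg hM' j k) h1 h2.le
  rcases cycProd_mul_cycProd M j k l with h | h
  · exact h ▸ hprod
  · exact (le_mul_of_one_le_left (cycProd_nonneg hM' j l) hR0.le).trans_lt (h ▸ hprod)

/-- Transitivity of the starvation relation when R₀ > 1. -/
theorem stmt7 (n : ℕ) [NeZero n] (M : ZMod n → ℝ) (hM : ∀ j, 0 < M j)
    (hR0 : 1 < ∏ j : ZMod n, M j)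
    (j k l : ZMod n) (hjk : j ≠ k) (hkl : k ≠ l)
    (h1 : cycProd M j k < 1) (h2 : cycProd M k l < 1) :
    cycProd M j l < 1 :=
  stmt7_general n M hM hR0 j k l h1 h2
end

section
/- Let (S*, T*) be a biologically meaningful infected fixed point with generic parameters (all M_{jk} ≠ 1 for j ≠ k, so T*_j > 0 for all regulated j). If j ≻ k (i.e., M_{jk} < 1) and j is regulated, then k is unregulated. -/
/-- At a biologically meaningful infected fixed point with generic parameters,
if j starves k (M_{jk} < 1) and j is regulated, then k is unregulated. -/
theorem stmt10 (n : ℕ) [NeZero n] (hn : 1 < n)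
    (r f a S T : ZMod n → ℝ) (b : ℝ)
    (hr : ∀ j, 0 < r j) (hf : ∀ j, 0 < f j) (hb : 0 < b)
    (haf : ∀ j, 0 < a j + f j)
    (hfix1 : ∀ j, r (j - 1) * f (j - 1) * S (j - 1) = S j * (a j + f j + T j))
    (hfix2 : ∀ j, (S j - b) * T j = 0)
    (hS : ∀ j, 0 ≤ S j) (hT : ∀ j, 0 ≤ T j)
    (hinf : ∃ j, S j ≠ 0)
    (hgen : ∀ j k : ZMod n, j ≠ k → cycProd (Mfac r f a) j k ≠ 1)
    (j k : ZMod n) (hjk : j ≠ k)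
    (hstarve : cycProd (Mfac r f a) j k < 1)
    (hreg : T j ≠ 0) :
    T k = 0 := by
  by_contra hTk
  have hSj : S j = b := by
    rcases mul_eq_zero.mp (hfix2 j) with h | h
    · linarith
    · exact absurd h hreg
  have hSk : S k = b := by
    rcases mul_eq_zero.mp (hfix2 k) with h | h
    · linarith
    · exact absurd h hTk
  set m := (k - j).val with hm
  have hjm : j + (m : ZMod n) = k := by
    rw [hm, ZMod.natCast_val, ZMod.cast_id]
    ring
  have key : ∀ M : ℕ, S (j + (M : ZMod n)) *
      ∏ i ∈ Finset.range M,
        (a (j + (i : ZMod n) + 1) + f (j + (i : ZMod n) + 1) + T (j + (i : ZMod n) + 1)) =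
      S j * ∏ i ∈ Finset.range M, (r (j + (i : ZMod n)) * f (j + (i : ZMod n))) := by
    intro M
    induction M with
    | zero => simp
    | succ M ih =>
      have h1 := hfix1 (j + (M : ZMod n) + 1)
      have e2 : j + (M : ZMod n) + 1 - 1 = j + (M : ZMod n) := by ring
      rw [e2] at h1
      rw [Finset.prod_range_succ, Finset.prod_range_succ]
      push_cast
      calc S (j + ((M : ZMod n) + 1)) *
            ((∏ i ∈ Finset.range M,
              (a (j + (i : ZMod n) + 1) + f (j + (i : ZMod n) + 1) + T (j + (i : ZMod n) + 1))) *
              (a (j + (M : ZMod n) + 1) + f (j + (M : ZMod n) + 1) + T (j + (M : ZMod n) + 1)))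
          = S (j + (M : ZMod n) + 1) *
              (a (j + (M : ZMod n) + 1) + f (j + (M : ZMod n) + 1) + T (j + (M : ZMod n) + 1)) *
              ∏ i ∈ Finset.range M,
                (a (j + (i : ZMod n) + 1) + f (j + (i : ZMod n) + 1) + T (j + (i : ZMod n) + 1)) := by
            rw [show j + ((M : ZMod n) + 1) = j + (M : ZMod n) + 1 by ring]; ring
        _ = (r (j + (M : ZMod n)) * f (j + (M : ZMod n))) *
              (S (j + (M : ZMod n)) *
              ∏ i ∈ Finset.range M,
                (a (j + (i : ZMod n) + 1) + f (j + (i : ZMod n) + 1) + T (j + (i : ZMod n) + 1))) := by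
            rw [← h1]; ring
        _ = (r (j + (M : ZMod n)) * f (j + (M : ZMod n))) *
              (S j * ∏ i ∈ Finset.range M, (r (j + (i : ZMod n)) * f (j + (i : ZMod n)))) := by
            rw [ih]
        _ = S j * ((∏ i ∈ Finset.range M, (r (j + (i : ZMod n)) * f (j + (i : ZMod n)))) *
              (r (j + (M : ZMod n)) * f (j + (M : ZMod n)))) := by ring
  have hcyc : cycProd (Mfac r f a) j k =
      (∏ i ∈ Finset.range m, (r (j + (i : ZMod n)) * f (j + (i : ZMod n)))) /
      ∏ i ∈ Finset.range m, (a (j + (i : ZMod n) + 1) + f (j + (i : ZMod n) + 1)) := by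
    rw [cycProd, ← Finset.prod_div_distrib]
    rfl
  set A := ∏ i ∈ Finset.range m,
      (a (j + (i : ZMod n) + 1) + f (j + (i : ZMod n) + 1) + T (j + (i : ZMod n) + 1)) with hA
  set B := ∏ i ∈ Finset.range m, (r (j + (i : ZMod n)) * f (j + (i : ZMod n))) with hB
  set C := ∏ i ∈ Finset.range m, (a (j + (i : ZMod n) + 1) + f (j + (i : ZMod n) + 1)) with hC
  have hCpos : 0 < C :=
    Finset.prod_pos fun i _ => haf _
  have hCA : C ≤ A := by
    apply Finset.prod_le_prod
    · intro i _; exact le_of_lt (haf _)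
    · intro i _; have := hT (j + (i : ZMod n) + 1); linarith
  have hkey := key m
  rw [hjm, hSj, hSk] at hkey
  have hAB : A = B := mul_left_cancel₀ (ne_of_gt hb) hkey
  have : (1 : ℝ) ≤ cycProd (Mfac r f a) j k := by
    rw [hcyc, ← hAB, le_div_iff₀ hCpos]
    linarith
  linarith
end

section
/- If a biologically meaningful infected fixed point is moderated (S*_k < b for all unregulated k), then it is saturated: its regulated set equals exactly the set of ≻-maximal (unstarvable) stages. -/
/-- Moderation implies saturation: if S*_k < b at every unregulated stage, then
the regulated set equals exactly the set of ≻-maximal (unstarvable) stages. -/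
theorem stmt13 (n : ℕ) [NeZero n] (hn : 1 < n)
    (r f a S T : ZMod n → ℝ) (b : ℝ)
    (hr : ∀ j, 0 < r j) (hf : ∀ j, 0 < f j) (hb : 0 < b)
    (haf : ∀ j, 0 < a j + f j)
    (hfix1 : ∀ j, r (j - 1) * f (j - 1) * S (j - 1) = S j * (a j + f j + T j))
    (hfix2 : ∀ j, (S j - b) * T j = 0)
    (hS : ∀ j, 0 ≤ S j) (hT : ∀ j, 0 ≤ T j)
    (hinf : ∃ j, S j ≠ 0)
    (hR0 : 1 < ∏ j : ZMod n, Mfac r f a j)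
    (hgen : ∀ j k : ZMod n, j ≠ k → cycProd (Mfac r f a) j k ≠ 1)
    (hmod : ∀ k : ZMod n, T k = 0 → S k < b) :
    ∀ j : ZMod n,
      T j ≠ 0 ↔ ∀ i : ZMod n, ¬ (i ≠ j ∧ cycProd (Mfac r f a) i j < 1) := by
  set M : ZMod n → ℝ := Mfac r f a with hMdef
  have hcast : ∀ x : ZMod n, ((x.val : ZMod n)) = x := by
    intro x; simp [ZMod.natCast_val, ZMod.cast_id]
  have hM : ∀ i, 0 < M i := fun i =>
    div_pos (mul_pos (hr i) (hf i)) (haf _)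
  -- all S positive
  have hfix1' : ∀ j : ZMod n, r j * f j * S j = S (j+1) * (a (j+1) + f (j+1) + T (j+1)) := by
    intro j
    have := hfix1 (j+1)
    simpa using this
  have hSpos : ∀ j, 0 < S j := by
    obtain ⟨j0, hj0⟩ := hinf
    have step : ∀ j : ZMod n, S j ≠ 0 → S (j + 1) ≠ 0 := by
      intro j hj h1
      have h2 := hfix1' j
      rw [h1, zero_mul] at h2
      rcases mul_eq_zero.mp h2 with h3 | h3
      · rcases mul_eq_zero.mp h3 with h4 | h4
        · exact (hr j).ne' h4
        · exact (hf j).ne' h4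
      · exact hj h3
    have all : ∀ m : ℕ, S (j0 + m) ≠ 0 := by
      intro m
      induction m with
      | zero => simpa using hj0
      | succ k ih =>
        have := step (j0 + k) ih
        rwa [show j0 + (k : ZMod n) + 1 = j0 + ((k+1 : ℕ) : ZMod n) by push_cast; ring] at this
    intro j
    have h := all ((j - j0).val)
    rw [hcast, show j0 + (j - j0) = j by ring] at h
    exact lt_of_le_of_ne (hS j) (Ne.symm h)
  -- one step
  have hstep_le : ∀ j : ZMod n, S (j + 1) ≤ M j * S j := by
    intro j
    have h := hfix1' j
    have hA := haf (j+1)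
    have hTj := hT (j+1)
    have hSj := hS (j+1)
    rw [hMdef]
    unfold Mfac
    rw [div_mul_eq_mul_div, le_div_iff₀ hA]
    nlinarith
  have hstep_eq : ∀ j : ZMod n, T (j + 1) = 0 → S (j + 1) = M j * S j := by
    intro j ht
    have h := hfix1' j
    rw [ht, add_zero] at h
    have hA := (haf (j+1)).ne'
    rw [hMdef]; unfold Mfac
    field_simp
    linarith [h]
  -- telescoping
  have hPpos : ∀ (j : ZMod n) (m : ℕ), 0 < ∏ i ∈ Finset.range m, M (j + (i : ZMod n)) :=
    fun j m => Finset.prod_pos (fun i _ => hM _)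
  have htel_le : ∀ (j : ZMod n) (m : ℕ),
      S (j + (m : ZMod n)) ≤ (∏ i ∈ Finset.range m, M (j + (i : ZMod n))) * S j := by
    intro j m
    induction m with
    | zero => simp
    | succ k ih =>
      have h1 : S (j + ((k+1 : ℕ) : ZMod n)) ≤ M (j + (k : ZMod n)) * S (j + (k : ZMod n)) := by
        have := hstep_le (j + (k : ZMod n))
        rwa [show j + (k : ZMod n) + 1 = j + ((k+1 : ℕ) : ZMod n) by push_cast; ring] at this
      calc S (j + ((k+1 : ℕ) : ZMod n)) ≤ M (j + (k : ZMod n)) * S (j + (k : ZMod n)) := h1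
        _ ≤ M (j + (k : ZMod n)) * ((∏ i ∈ Finset.range k, M (j + (i : ZMod n))) * S j) :=
            mul_le_mul_of_nonneg_left ih (hM _).le
        _ = (∏ i ∈ Finset.range (k+1), M (j + (i : ZMod n))) * S j := by
            rw [Finset.prod_range_succ]; ring
  have htel_eq : ∀ (j : ZMod n) (m : ℕ), (∀ i < m, T (j + (i : ZMod n) + 1) = 0) →
      S (j + (m : ZMod n)) = (∏ i ∈ Finset.range m, M (j + (i : ZMod n))) * S j := by
    intro j m hm
    induction m with
    | zero => simp
    | succ k ih =>
      have h1 : S (j + ((k+1 : ℕ) : ZMod n)) = M (j + (k : ZMod n)) * S (j + (k : ZMod n)) := by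
        have := hstep_eq (j + (k : ZMod n)) (hm k (Nat.lt_succ_self k))
        rwa [show j + (k : ZMod n) + 1 = j + ((k+1 : ℕ) : ZMod n) by push_cast; ring] at this
      rw [h1, ih (fun i hi => hm i (hi.trans (Nat.lt_succ_self k))), Finset.prod_range_succ]
      ring
  -- S ≤ b everywhere
  have hSb : ∀ i, S i ≤ b := by
    intro i
    by_cases h : T i = 0
    · exact (hmod i h).le
    · rcases mul_eq_zero.mp (hfix2 i) with h' | h'
      · linarith [sub_eq_zero.mp h']
      · exact absurd h' h
  have hSeqb : ∀ i, T i ≠ 0 → S i = b := by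
    intro i h
    rcases mul_eq_zero.mp (hfix2 i) with h' | h'
    · exact sub_eq_zero.mp h'
    · exact absurd h' h
  -- main telescoping to cycProd
  have hkey : ∀ i j : ZMod n, S j ≤ cycProd M i j * S i := by
    intro i j
    have := htel_le i ((j - i).val)
    rwa [hcast, show i + (j - i) = j by ring] at this
  -- existence of a regulated stage
  have hreg : ∃ h : ZMod n, T h ≠ 0 := by
    by_contra hc
    push_neg at hc
    have h0 := htel_eq 0 n (fun i _ => hc _)
    rw [ZMod.natCast_self, add_zero] at h0
    have hprod : (∏ i ∈ Finset.range n, M (0 + (i : ZMod n))) = ∏ j : ZMod n, M j := by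
      rw [show (fun i : ℕ => M (0 + (i : ZMod n))) = fun i : ℕ => M (i : ZMod n) by
        funext i; rw [zero_add]]
      refine Finset.prod_bij (fun (i : ℕ) _ => (i : ZMod n)) (fun _ _ => Finset.mem_univ _)
        ?_ ?_ (fun _ _ => rfl)
      · intro x hx y hy hxy
        have := congrArg ZMod.val hxy
        rwa [ZMod.val_cast_of_lt (Finset.mem_range.mp hx),
          ZMod.val_cast_of_lt (Finset.mem_range.mp hy)] at this
      · intro x _
        exact ⟨x.val, Finset.mem_range.mpr (ZMod.val_lt x), hcast x⟩
    rw [hprod] at h0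
    nlinarith [hSpos 0, hR0, h0]
  intro j
  constructor
  · -- regulated → maximal
    intro hTj i hi
    obtain ⟨hij, hlt⟩ := hi
    have hSj : S j = b := hSeqb j hTj
    have hk := hkey i j
    have hcp : 0 < cycProd M i j := hPpos i _
    have hSi := hSb i
    nlinarith
  · -- maximal → regulated
    intro hmax
    intro hTj
    have hSj : S j < b := hmod j hTj
    obtain ⟨h, hh⟩ := hreg
    obtain ⟨h0, hh0, hmin⟩ := Finset.exists_min_image
      (Finset.univ.filter (fun l : ZMod n => T l ≠ 0)) (fun l => (j - l).val)
      ⟨h, Finset.mem_filter.mpr ⟨Finset.mem_univ _, hh⟩⟩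
    have hh0' : T h0 ≠ 0 := (Finset.mem_filter.mp hh0).2
    have hh0j : h0 ≠ j := fun e => hh0' (e ▸ hTj)
    set m := (j - h0).val with hmdef
    have hm0 : 0 < m := by
      rcases Nat.eq_zero_or_pos m with h' | h'
      · exact absurd (sub_eq_zero.mp ((ZMod.val_eq_zero _).mp h')).symm hh0j
      · exact h'
    have hclaim : ∀ i < m, T (h0 + (i : ZMod n) + 1) = 0 := by
      intro i hi
      by_contra hc
      have hmem : h0 + (i : ZMod n) + 1 ∈ Finset.univ.filter (fun l : ZMod n => T l ≠ 0) :=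
        Finset.mem_filter.mpr ⟨Finset.mem_univ _, hc⟩
      have hle := hmin _ hmem
      have hip1 : i + 1 ≤ m := hi
      have hsub : j - (h0 + (i : ZMod n) + 1) = ((m - (i+1) : ℕ) : ZMod n) := by
        have h1 : j - h0 = ((m : ℕ) : ZMod n) := (hcast _).symm
        rw [Nat.cast_sub hip1]
        push_cast
        linear_combination h1
      rw [hsub, ZMod.val_cast_of_lt (lt_of_le_of_lt (Nat.sub_le _ _) (ZMod.val_lt _))] at hle
      omega
    have heq := htel_eq h0 m hclaim
    rw [hmdef, hcast, show h0 + (j - h0) = j by ring] at heq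
    have hSh0 : S h0 = b := hSeqb h0 hh0'
    have hcyc : cycProd M h0 j = ∏ i ∈ Finset.range m, M (h0 + (i : ZMod n)) := rfl
    have hlt1 : cycProd M h0 j < 1 := by
      rw [hcyc]
      nlinarith [heq, hSh0, hSj, hPpos h0 m]
    exact hmax h0 ⟨hh0j, hlt1⟩
end

section
/- For the completely regulated infected fixed point, T*_j is independent of j if and only if the expression r_{j-1} f_{j-1} − (a_j + f_j) is positive and independent of j; in that case, with x = S_j, y = T_j on the diagonal Δ_S × Δ_T, the system restricts to the Lotka–Volterra equations ẋ = (α − y)x, ẏ = (x − β)y with α = r_{j-1} f_{j-1} − (a_j + f_j) and β = b. -/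
/-!
At a fixed point with every `T_j > 0`, the equation `(S_j - b) T_j = 0` forces `S_j = b` for all
`j`; dividing the `S`-equation by `b` then gives `T_j = r_{j-1} f_{j-1} - (a_j + f_j)`. So `T` is
constant exactly when this expression is, and its common value is then positive.
-/

theorem eq_of_sub_mul_eq_zero_of_pos {s t b : ℝ} (h : (s - b) * t = 0) (ht : 0 < t) : s = b :=
  sub_eq_zero.mp ((mul_eq_zero.mp h).resolve_right ht.ne')

theorem regulated_T_eq {ι : Type*} [Sub ι] [One ι] (r f a S T : ι → ℝ) {b : ℝ} (hb : 0 < b)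
    (hfix1 : ∀ j, r (j - 1) * f (j - 1) * S (j - 1) = S j * (a j + f j + T j))
    (hS : ∀ j, S j = b) (j : ι) :
    T j = r (j - 1) * f (j - 1) - (a j + f j) := by
  have h := hfix1 j
  rw [hS j, hS (j - 1)] at h
  have : r (j - 1) * f (j - 1) = a j + f j + T j := mul_right_cancel₀ hb.ne' (by linarith)
  linarith

theorem exists_const_iff_exists_pos_const {ι : Type*} [Nonempty ι] {T g : ι → ℝ}
    (hTg : ∀ j, T j = g j) (hpos : ∀ j, 0 < T j) :
    (∃ τ, ∀ j, T j = τ) ↔ ∃ α, 0 < α ∧ ∀ j, g j = α := by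
  constructor
  · rintro ⟨τ, hτ⟩
    obtain ⟨j₀⟩ := ‹Nonempty ι›
    exact ⟨τ, hτ j₀ ▸ hpos j₀, fun j => hTg j ▸ hτ j⟩
  · rintro ⟨α, -, hα⟩
    exact ⟨α, fun j => (hTg j).trans (hα j)⟩

theorem stmt18_general (n : ℕ)
    (r f a S T : ZMod n → ℝ) (b : ℝ) (hb : 0 < b)
    (hfix1 : ∀ j, r (j - 1) * f (j - 1) * S (j - 1) = S j * (a j + f j + T j))
    (hfix2 : ∀ j, (S j - b) * T j = 0)
    (hreg : ∀ j, 0 < T j) :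
    ((∃ τ : ℝ, ∀ j, T j = τ) ↔
      (∃ α : ℝ, 0 < α ∧ ∀ j, r (j - 1) * f (j - 1) - (a j + f j) = α)) ∧
    (∀ α : ℝ, 0 < α → (∀ j, r (j - 1) * f (j - 1) - (a j + f j) = α) →
      ∀ x y : ℝ, ∀ j : ZMod n,
        r (j - 1) * f (j - 1) * x - (a j + f j) * x - x * y = (α - y) * x ∧
        (x - b) * y = (x - b) * y) := by
  have hS : ∀ j, S j = b := fun j => eq_of_sub_mul_eq_zero_of_pos (hfix2 j) (hreg j)
  refine ⟨exists_const_iff_exists_pos_const (regulated_T_eq r f a S T hb hfix1 hS) hreg, ?_⟩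
  intro α _ hα x y j
  exact ⟨by linear_combination hα j * x, rfl⟩

/-- For the completely regulated infected fixed point, T*_j is independent of j
iff r_{j-1} f_{j-1} − (a_j + f_j) is positive and independent of j; in that
case the system restricted to the diagonal Δ_S × Δ_T is the Lotka–Volterra
system ẋ = (α − y)x, ẏ = (x − β)y with β = b. -/
theorem stmt18 (n : ℕ) [NeZero n] (hn : 1 < n)
    (r f a S T : ZMod n → ℝ) (b : ℝ) (hb : 0 < b)
    (hr : ∀ j, 0 < r j) (hf : ∀ j, 0 < f j) (haf : ∀ j, 0 < a j + f j)
    (hfix1 : ∀ j, r (j - 1) * f (j - 1) * S (j - 1) = S j * (a j + f j + T j))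
    (hfix2 : ∀ j, (S j - b) * T j = 0)
    (hreg : ∀ j, 0 < T j) :
    ((∃ τ : ℝ, ∀ j, T j = τ) ↔
      (∃ α : ℝ, 0 < α ∧ ∀ j, r (j - 1) * f (j - 1) - (a j + f j) = α)) ∧
    (∀ α : ℝ, 0 < α → (∀ j, r (j - 1) * f (j - 1) - (a j + f j) = α) →
      ∀ x y : ℝ, ∀ j : ZMod n,
        r (j - 1) * f (j - 1) * x - (a j + f j) * x - x * y = (α - y) * x ∧
        (x - b) * y = (x - b) * y) :=
  stmt18_general n r f a S T b hb hfix1 hfix2 hreg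
end

section
/- At any biologically meaningful infected fixed point (possibly with self-establishing stages, i.e., some a_j + f_j < 0), all stage populations are strictly positive and a_j + f_j + T*_j > 0 for every j; moreover every self-establishing stage (a_j + f_j < 0) is regulated (T*_j > 0). -/
/-! Positivity spreads around the cycle: a positive `S*_{j-1}` makes the left side of the
first fixed-point equation positive, so with `S*_j ≥ 0` both `S*_j` and `a_j + f_j + T*_j`
are positive. Going once around the cycle reaches every stage, and `a_j + f_j < 0` then
forces `T*_j > 0`. -/

theorem ZMod.forall_of_add_one {n : ℕ} [NeZero n] {P : ZMod n → Prop} {j₀ : ZMod n}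
    (h₀ : P j₀) (hsucc : ∀ j, P j → P (j + 1)) (j : ZMod n) : P j := by
  have hadd : ∀ k : ℕ, P (j₀ + k) := by
    intro k
    induction k with
    | zero => simpa using h₀
    | succ k ih => simpa [add_assoc] using hsucc _ ih
  simpa using hadd (j - j₀).val

theorem stmt19_general (n : ℕ) [NeZero n]
    (r f a S T : ZMod n → ℝ)
    (hr : ∀ j, 0 < r j) (hf : ∀ j, 0 < f j)
    (hfix1 : ∀ j, r (j - 1) * f (j - 1) * S (j - 1) = S j * (a j + f j + T j))
    (hS : ∀ j, 0 ≤ S j)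
    (hinf : ∃ j, 0 < S j) :
    (∀ j, 0 < S j) ∧ (∀ j, 0 < a j + f j + T j) ∧
      (∀ j, a j + f j < 0 → 0 < T j) := by
  have hrhs_pos : ∀ j, 0 < S (j - 1) → 0 < S j * (a j + f j + T j) := fun j hj ↦
    hfix1 j ▸ mul_pos (mul_pos (hr _) (hf _)) hj
  obtain ⟨j₀, hj₀⟩ := hinf
  have hSpos : ∀ j, 0 < S j := ZMod.forall_of_add_one hj₀ fun j hj ↦
    (hS _).lt_of_ne' (left_ne_zero_of_mul (hrhs_pos (j + 1) (by simpa using hj)).ne')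
  have hpos : ∀ j, 0 < a j + f j + T j := fun j ↦
    pos_of_mul_pos_right (hrhs_pos j (hSpos _)) (hS j)
  exact ⟨hSpos, hpos, fun j hneg ↦ by linarith [hpos j]⟩

/-- At any biologically meaningful infected fixed point (possibly with
self-establishing stages), all S*_j > 0 and a_j + f_j + T*_j > 0; moreover every
self-establishing stage (a_j + f_j < 0) is regulated (T*_j > 0). -/
theorem stmt19 (n : ℕ) [NeZero n] (hn : 1 < n)
    (r f a S T : ZMod n → ℝ) (b : ℝ)
    (hr : ∀ j, 0 < r j) (hf : ∀ j, 0 < f j) (hb : 0 < b)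
    (haf : ∀ j, a j + f j ≠ 0)
    (hfix1 : ∀ j, r (j - 1) * f (j - 1) * S (j - 1) = S j * (a j + f j + T j))
    (hfix2 : ∀ j, (S j - b) * T j = 0)
    (hS : ∀ j, 0 ≤ S j) (hT : ∀ j, 0 ≤ T j)
    (hinf : ∃ j, 0 < S j) :
    (∀ j, 0 < S j) ∧ (∀ j, 0 < a j + f j + T j) ∧
      (∀ j, a j + f j < 0 → 0 < T j) :=
  stmt19_general n r f a S T hr hf hfix1 hS hinf
end
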